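/- Let M ≥ 1 be an integer, λ₁, …, λ_M real numbers, r₁ > r₂ > ⋯ > r_M > 0, and n a positive integer. Then for all integers 1 ≤ i < j ≤ M, there holds the recursion L_M^{i,j}(n) = (t_{j,i} + 1) · L_M^{j,j+1}(n) + (−2λ_j − 1) · L_M^{i,j+1}(n), where t_{p,q} := (r_q/r_p)^{2n}. -/
import Mathlib


open Matrix

/-- `t_{p,q} = (r_q / r_p)^{2n}`. -/
noncomputable def tpow (r : ℕ → ℝ) (n p q : ℕ) : ℝ := (r q / r p) ^ (2 * n)

/-- The `(M-j+2) × (M-j+2)` matrix whose determinant is `L_M^{i,j}(n)`: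
columns indexed by `i` followed by `m = j, …, M`; the first row is
`(r_i^{2n}, r_j^{2n}, …, r_M^{2n})`; the rows indexed by `q = j, …, M-1` have first entry
`-1 - t_{q,i}`, entries `-1 - t_{q,m}` in columns `j ≤ m < q`, entry `-2λ_q - 1` in
column `m = q`, and `0` in columns `m > q`; the last row is `(-1, …, -1, -2λ_M)`. -/
noncomputable def Lmat (M : ℕ) (lam r : ℕ → ℝ) (n i j : ℕ) :
    Matrix (Fin (M - j + 2)) (Fin (M - j + 2)) ℝ :=
  Matrix.of fun p c =>
    if (p : ℕ) = 0 then
      if (c : ℕ) = 0 then r i ^ (2 * n) else r (j + (c : ℕ) - 1) ^ (2 * n)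
    else if (p : ℕ) = M - j + 1 then
      if (c : ℕ) = M - j + 1 then -2 * lam M else -1
    else
      let q := j + (p : ℕ) - 1
      if (c : ℕ) = 0 then -1 - tpow r n q i
      else
        let m := j + (c : ℕ) - 1
        if m < q then -1 - tpow r n q m
        else if m = q then -2 * lam q - 1
        else 0

/-- `L_M^{i,j}(n)` for `j ≤ M`, with the convention `L_M^{i,M+1}(n) = r_i^{2n}`. -/
noncomputable def Ldet (M : ℕ) (lam r : ℕ → ℝ) (n i j : ℕ) : ℝ :=
  if j ≤ M then (Lmat M lam r n i j).det else r i ^ (2 * n)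


lemma succAbove_one_val (k : ℕ) (p : Fin (k + 1)) :
    (((1 : Fin (k + 2)).succAbove p) : ℕ) = if (p:ℕ) < 1 then (p:ℕ) else (p:ℕ)+1 := by
  rcases lt_or_ge (p.castSucc) 1 with h | h
  · rw [Fin.succAbove_of_castSucc_lt _ _ h, Fin.coe_castSucc,
      if_pos (by simpa [Fin.lt_def] using h)]
  · rw [Fin.succAbove_of_le_castSucc _ _ h, Fin.val_succ,
      if_neg (by simp [Fin.le_def] at h; omega)]

set_option maxHeartbeats 1000000 in
lemma subA (M : ℕ) (lam r : ℕ → ℝ) (n i j : ℕ) (hj : j < M)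
    (h : M - j + 1 = M - (j+1) + 2) :
    (Lmat M lam r n i j).submatrix ((1 : Fin (M - j + 2)).succAbove)
        ((1 : Fin (M - j + 2)).succAbove)
      = (Lmat M lam r n i (j+1)).submatrix (Fin.cast h) (Fin.cast h) := by
  ext p c
  simp only [Matrix.submatrix_apply, Lmat, Matrix.of_apply, Fin.coe_cast,
    succAbove_one_val]
  split_ifs <;> first | rfl | omega | exact (by assumption : False).elim | (congr 2 <;> omega) | (congr 3 <;> omega)

set_option maxHeartbeats 1000000 in
lemma subB (M : ℕ) (lam r : ℕ → ℝ) (n i j : ℕ) (hj : j < M)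
    (h : M - j + 1 = M - (j+1) + 2) :
    (Lmat M lam r n i j).submatrix ((1 : Fin (M - j + 2)).succAbove)
        ((0 : Fin (M - j + 2)).succAbove)
      = (Lmat M lam r n j (j+1)).submatrix (Fin.cast h) (Fin.cast h) := by
  ext p c
  simp only [Matrix.submatrix_apply, Lmat, Matrix.of_apply, Fin.coe_cast,
    succAbove_one_val, Fin.zero_succAbove, Fin.val_succ]
  split_ifs <;> first | rfl | omega | exact (by assumption : False).elim | (congr 2 <;> omega) | (congr 3 <;> omega)

/-- The recursion `L_M^{i,j} = (t_{j,i}+1) L_M^{j,j+1} + (-2λ_j-1) L_M^{i,j+1}`. -/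
theorem Ldet_recursion (M : ℕ) (hM : 1 ≤ M) (lam r : ℕ → ℝ)
    (hr : ∀ k, 1 ≤ k → k < M → r (k + 1) < r k) (hrM : 0 < r M)
    (n : ℕ) (hn : 0 < n) :
    ∀ i j : ℕ, 1 ≤ i → i < j → j ≤ M →
      Ldet M lam r n i j =
        (tpow r n j i + 1) * Ldet M lam r n j (j + 1)
          + (-2 * lam j - 1) * Ldet M lam r n i (j + 1) := by
  intro i j hi hij hjM
  rcases eq_or_lt_of_le hjM with hjeq | hjM'
  · subst hjeq
    rw [Ldet, Ldet, Ldet, if_pos le_rfl, if_neg (by omega), if_neg (by omega)]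
    have h2 : j - j + 2 = 2 := by omega
    rw [show (Lmat j lam r n i j).det
        = (((Lmat j lam r n i j).submatrix (finCongr h2.symm) (finCongr h2.symm)).det) from
      (Matrix.det_submatrix_equiv_self _ _).symm]
    rw [Matrix.det_fin_two]
    simp only [Matrix.submatrix_apply, finCongr_apply, Lmat, Matrix.of_apply, Fin.cast]
    norm_num
    rw [tpow, div_pow]
    have h0 : (r j)^(2*n) ≠ 0 := by positivity
    field_simp
    ring
  · have h : M - j + 1 = M - (j+1) + 2 := by omega
    rw [Ldet, Ldet, Ldet, if_pos hjM, if_pos (by omega : j + 1 ≤ M),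
      if_pos (by omega : j + 1 ≤ M)]
    rw [Matrix.det_succ_row (Lmat M lam r n i j) 1]
    rw [Fin.sum_univ_succ, Fin.sum_univ_succ]
    have hzero : ∀ c : Fin (M - j), Lmat M lam r n i j 1 c.succ.succ = 0 := by
      intro c
      have hv : ((c.succ.succ : Fin (M - j + 2)) : ℕ) = (c : ℕ) + 2 := rfl
      simp only [Lmat, Matrix.of_apply, hv, Fin.val_one]
      rw [if_neg (by omega), if_neg (by omega : ¬(1 = M - j + 1)), if_neg (by omega),
        if_neg (by omega), if_neg (by omega)]
    have hA10 : Lmat M lam r n i j 1 0 = -1 - tpow r n j i := by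
      simp only [Lmat, Matrix.of_apply, Fin.val_one, Fin.val_zero]
      rw [if_neg (by omega), if_neg (by omega : ¬(1 = M - j + 1)), if_pos trivial]
      congr 3
    have hA11 : Lmat M lam r n i j 1 1 = -2 * lam j - 1 := by
      simp only [Lmat, Matrix.of_apply, Fin.val_one]
      rw [if_neg (by omega), if_neg (by omega : ¬(1 = M - j + 1)), if_neg (by omega),
        if_neg (by omega : ¬(j + 1 - 1 < j + 1 - 1)), if_pos trivial]
      congr 2
    have hd0 : Matrix.det ((Lmat M lam r n i j).submatrix
        ((1 : Fin (M - j + 2)).succAbove) ((0 : Fin (M - j + 2)).succAbove))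
        = (Lmat M lam r n j (j+1)).det := by
      rw [subB M lam r n i j hjM' h]
      exact Matrix.det_submatrix_equiv_self (finCongr h) _
    have hd1 : Matrix.det ((Lmat M lam r n i j).submatrix
        ((1 : Fin (M - j + 2)).succAbove) ((1 : Fin (M - j + 2)).succAbove))
        = (Lmat M lam r n i (j+1)).det := by
      rw [subA M lam r n i j hjM' h]
      exact Matrix.det_submatrix_equiv_self (finCongr h) _
    rw [Fintype.sum_eq_zero _ fun c => by rw [hzero c]; ring]
    simp only [Fin.succ_zero_eq_one, Fin.val_zero, Fin.val_one]
    rw [hA10, hA11, hd0, hd1]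
    norm_num
    try ring
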